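/- arXiv:1203.3768 — 3 statements merged into one kernel-verified Lean document; each statement's English description precedes it below -/
import Mathlib

section
/- For continuous functions f₁,…,fₛ, g₁,…,g_{s'} : [0,1] → ℝ, the product (∫_{0<t₁<⋯<tₛ<1} ∏ fᵢ(tᵢ) dt)(∫_{0<u₁<⋯<u_{s'}<1} ∏ gⱼ(uⱼ) du) equals the sum over all (s,s')-shuffles τ of ∫_{0<v₁<⋯<v_{s+s'}<1} ∏_{k} h_{τ⁻¹(k)}(v_k) dv, where h₁,…,hₛ = f₁,…,fₛ and h_{s+1},…,h_{s+s'} = g₁,…,g_{s'}. -/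
/-!
Up to the null set of points with a repeated coordinate, the product of the two simplices,
viewed inside `ℝ^(s+s')`, is the disjoint union over `(s,s')`-shuffles `τ` of the cells
`{w | w ∘ τ⁻¹ is strictly increasing}`: sorting the coordinates of a point determines `τ`, and
`τ` is a shuffle exactly because each block of coordinates is already increasing. Each cell is
the image of the `(s+s')`-simplex under a coordinate permutation, which preserves volume.
-/

open MeasureTheory

/-- An `(s,s')`-shuffle. -/
def IsShuffle {s s' : ℕ} (τ : Equiv.Perm (Fin (s + s'))) : Prop :=
  StrictMono (fun i : Fin s => τ (Fin.castAdd s' i)) ∧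
    StrictMono (fun i : Fin s' => τ (Fin.natAdd s i))

/-- The open order simplex `{0 < t₁ < ⋯ < tₛ < 1} ⊆ ℝˢ`. -/
def orderSimplex (s : ℕ) : Set (Fin s → ℝ) :=
  {t | StrictMono t ∧ ∀ i, t i ∈ Set.Ioo (0:ℝ) 1}

namespace MeasurableEquiv

variable (α : Type*) [MeasurableSpace α] (s s' : ℕ)

def finAddSplit : (Fin (s + s') → α) ≃ᵐ (Fin s → α) × (Fin s' → α) :=
  (piCongrLeft (fun _ => α) finSumFinEquiv).symm.trans (sumPiEquivProdPi fun _ => α)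

variable {α s s'}

@[simp]
lemma finAddSplit_apply (w : Fin (s + s') → α) :
    finAddSplit α s s' w = (fun i => w (Fin.castAdd s' i), fun j => w (Fin.natAdd s j)) := by
  ext <;> simp [finAddSplit, piCongrLeft, sumPiEquivProdPi]

end MeasurableEquiv

section CoordinateChanges

open MeasurableEquiv

variable {α : Type*} [MeasureSpace α] [SigmaFinite (volume : Measure α)]

lemma volume_measurePreserving_finAddSplit (s s' : ℕ) :
    MeasurePreserving (finAddSplit α s s') volume volume :=
  (volume_measurePreserving_sumPiEquivProdPi _).comp
    ((volume_measurePreserving_piCongrLeft _ finSumFinEquiv).symm _)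

lemma setIntegral_mul_setIntegral_eq_setIntegral_finAddSplit {𝕜 : Type*} [RCLike 𝕜] {s s' : ℕ}
    (S : Set (Fin s → α)) (S' : Set (Fin s' → α)) (F : (Fin s → α) → 𝕜)
    (G : (Fin s' → α) → 𝕜) :
    (∫ t in S, F t) * (∫ u in S', G u) =
      ∫ w in finAddSplit α s s' ⁻¹' (S ×ˢ S'),
        F (fun i => w (Fin.castAdd s' i)) * G (fun j => w (Fin.natAdd s j)) := by
  rw [← setIntegral_prod_mul, ← Measure.volume_eq_prod,
    ← (volume_measurePreserving_finAddSplit s s').setIntegral_preimage_emb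
      (finAddSplit α s s').measurableEmbedding]
  simp

lemma setIntegral_comp_perm {ι E : Type*} [Fintype ι] [NormedAddCommGroup E] [NormedSpace ℝ E]
    (σ : Equiv.Perm ι) (S : Set (ι → α)) (F : (ι → α) → E) :
    ∫ v in S, F (v ∘ σ) = ∫ w in (fun w => w ∘ σ.symm) ⁻¹' S, F w := by
  let T := MeasurableEquiv.piCongrLeft (fun _ => α) σ
  have hT : ⇑T = fun w => w ∘ σ.symm := funext fun w => funext fun k => by
    obtain ⟨i, rfl⟩ := σ.surjective k
    simp [T, piCongrLeft_apply_apply]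
  have key := (volume_measurePreserving_piCongrLeft (fun _ => α) σ).setIntegral_preimage_emb
    T.measurableEmbedding (fun v => F (v ∘ σ)) S
  rw [hT] at key
  simpa [Function.comp_assoc] using key.symm

end CoordinateChanges

lemma Tuple.eq_sort_of_strictMono_comp {n : ℕ} {β : Type*} [LinearOrder β] {w : Fin n → β}
    {σ : Equiv.Perm (Fin n)} (h : StrictMono (w ∘ σ)) : σ = Tuple.sort w :=
  Tuple.eq_sort_iff.2 ⟨h.monotone, fun _ _ hij heq => absurd heq (h hij).ne⟩

lemma isShuffle_iff_of_strictMono_comp {s s' : ℕ} {β : Type*} [LinearOrder β]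
    {w : Fin (s + s') → β} {τ : Equiv.Perm (Fin (s + s'))} (hw : StrictMono (w ∘ τ.symm)) :
    IsShuffle τ ↔
      StrictMono (fun i => w (Fin.castAdd s' i)) ∧ StrictMono (fun j => w (Fin.natAdd s j)) := by
  have hlt : ∀ a b, w a < w b ↔ τ a < τ b := fun a b => by
    simpa using hw.lt_iff_lt (a := τ a) (b := τ b)
  simp only [IsShuffle, StrictMono, hlt]

lemma isOpen_orderSimplex (n : ℕ) : IsOpen (orderSimplex n) := by
  have h : orderSimplex n = (⋂ (i) (j) (_ : i < j), {t : Fin n → ℝ | t i < t j}) ∩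
      ⋂ i, (fun t => t i) ⁻¹' Set.Ioo 0 1 := by
    ext t
    simp [orderSimplex, StrictMono]
  rw [h]
  exact (isOpen_iInter_of_finite fun i => isOpen_iInter_of_finite fun j =>
      isOpen_iInter_of_finite fun _ => isOpen_lt (continuous_apply i) (continuous_apply j)).inter
    (isOpen_iInter_of_finite fun i => isOpen_Ioo.preimage (continuous_apply i))

def permSimplex {n : ℕ} (τ : Equiv.Perm (Fin n)) : Set (Fin n → ℝ) :=
  (fun w => w ∘ τ.symm) ⁻¹' orderSimplex n

def prodSimplex (s s' : ℕ) : Set (Fin (s + s') → ℝ) :=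
  MeasurableEquiv.finAddSplit ℝ s s' ⁻¹' (orderSimplex s ×ˢ orderSimplex s')

lemma measurableSet_permSimplex {n : ℕ} (τ : Equiv.Perm (Fin n)) :
    MeasurableSet (permSimplex τ) :=
  ((isOpen_orderSimplex n).preimage (continuous_pi fun _ => continuous_apply _)).measurableSet

lemma permSimplex_subset_pi_Icc {n : ℕ} (τ : Equiv.Perm (Fin n)) :
    permSimplex τ ⊆ Set.univ.pi fun _ => Set.Icc 0 1 := by
  intro w hw k _
  simpa using Set.Ioo_subset_Icc_self (hw.2 (τ k))

lemma mem_prodSimplex {s s' : ℕ} {w : Fin (s + s') → ℝ} :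
    w ∈ prodSimplex s s' ↔ (StrictMono (fun i => w (Fin.castAdd s' i)) ∧
      StrictMono (fun j => w (Fin.natAdd s j))) ∧ ∀ k, w k ∈ Set.Ioo 0 1 := by
  simp only [prodSimplex, orderSimplex, Set.mem_preimage, MeasurableEquiv.finAddSplit_apply,
    Set.mem_prod, Set.mem_ofPred_eq, Fin.forall_fin_add (fun k => w k ∈ Set.Ioo 0 1)]
  tauto

lemma permSimplex_subset_prodSimplex {s s' : ℕ} {τ : Equiv.Perm (Fin (s + s'))}
    (hτ : IsShuffle τ) : permSimplex τ ⊆ prodSimplex s s' := fun w ⟨hmono, hIoo⟩ =>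
  mem_prodSimplex.2
    ⟨(isShuffle_iff_of_strictMono_comp hmono).1 hτ, fun k => by simpa using hIoo (τ k)⟩

lemma pairwise_disjoint_permSimplex (n : ℕ) :
    Pairwise (Function.onFun Disjoint (permSimplex (n := n))) := fun _ _ hne =>
  Set.disjoint_left.2 fun _ hw₁ hw₂ => hne <| Equiv.symm_bijective.injective <|
    (Tuple.eq_sort_of_strictMono_comp hw₁.1).trans (Tuple.eq_sort_of_strictMono_comp hw₂.1).symm

lemma mem_permSimplex_sort_symm {s s' : ℕ} {w : Fin (s + s') → ℝ} (hw : w ∈ prodSimplex s s')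
    (hinj : Function.Injective w) :
    IsShuffle (Tuple.sort w).symm ∧ w ∈ permSimplex (Tuple.sort w).symm := by
  have hsorted : StrictMono (w ∘ (Tuple.sort w).symm.symm) :=
    (Tuple.monotone_sort w).strictMono_of_injective (hinj.comp (Tuple.sort w).injective)
  obtain ⟨hmono, hIoo⟩ := mem_prodSimplex.1 hw
  exact ⟨(isShuffle_iff_of_strictMono_comp hsorted).2 hmono, hsorted, fun k => hIoo _⟩

lemma volume_setOf_not_injective (ι : Type*) [Fintype ι] :
    volume {w : ι → ℝ | ¬ Function.Injective w} = 0 := by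
  classical
  have hsub : {w : ι → ℝ | ¬ Function.Injective w} ⊆
      ⋃ (i) (j) (_ : i ≠ j), LinearMap.ker ((LinearMap.proj i : (ι → ℝ) →ₗ[ℝ] ℝ) -
        LinearMap.proj j) := by
    intro w hw
    simp only [Function.Injective, not_forall] at hw
    obtain ⟨i, j, hij, hne⟩ := hw
    simpa [sub_eq_zero] using ⟨i, j, hne, hij⟩
  refine measure_mono_null hsub <| measure_iUnion_null fun i => measure_iUnion_null fun j =>
    measure_iUnion_null fun hne => Measure.addHaar_submodule _ _ fun htop => ?_
  have : Pi.single i 1 ∈ LinearMap.ker ((LinearMap.proj i : (ι → ℝ) →ₗ[ℝ] ℝ) -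
      LinearMap.proj j) := htop ▸ Submodule.mem_top
  simp [hne.symm] at this

open scoped Classical in
lemma prodSimplex_ae_eq_iUnion_permSimplex (s s' : ℕ) :
    prodSimplex s s' =ᵐ[volume] ⋃ τ ∈ Finset.univ.filter (fun τ : Equiv.Perm (Fin (s + s')) =>
      IsShuffle τ), permSimplex τ := by
  refine (ae_eq_set.2 ⟨measure_mono_null ?_ (volume_setOf_not_injective (Fin (s + s'))), ?_⟩)
  · rintro w ⟨hw, hw'⟩ hinj
    obtain ⟨hτ, hwτ⟩ := mem_permSimplex_sort_symm hw hinj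
    exact hw' (Set.mem_biUnion (by simpa using hτ) hwτ)
  · rw [Set.sdiff_eq_empty.2 (Set.iUnion₂_subset fun τ hτ =>
      permSimplex_subset_prodSimplex (Finset.mem_filter.1 hτ).2), measure_empty]

open scoped Classical in
/-- Shuffle relation for one-dimensional iterated integrals of scalar integrands:
`(∫_{0<t₁<⋯<tₛ<1} ∏ fᵢ(tᵢ)) (∫_{0<u₁<⋯<u_{s'}<1} ∏ gⱼ(uⱼ))
  = Σ_τ ∫_{0<v₁<⋯<v_{s+s'}<1} ∏ₖ h_{τ⁻¹(k)}(vₖ)`,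
the sum over `(s,s')`-shuffles `τ`, where `h = (f₁,…,fₛ,g₁,…,g_{s'})`. -/
theorem shuffle_relation_iterated_integrals (s s' : ℕ)
    (f : Fin s → ℝ → ℝ) (g : Fin s' → ℝ → ℝ)
    (hf : ∀ i, Continuous (f i)) (hg : ∀ j, Continuous (g j)) :
    (∫ t in orderSimplex s, ∏ i, f i (t i)) * (∫ u in orderSimplex s', ∏ j, g j (u j)) =
      ∑ τ ∈ Finset.univ.filter (fun τ : Equiv.Perm (Fin (s + s')) => IsShuffle τ),
        ∫ v in orderSimplex (s + s'),
          ∏ k, Sum.elim f g (finSumFinEquiv.symm (τ.symm k)) (v k) := by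
  set h : Fin (s + s') → ℝ → ℝ := fun k => Sum.elim f g (finSumFinEquiv.symm k)
  have hh : ∀ k, Continuous (h k) := Fin.addCases (by simpa [h] using hf) (by simpa [h] using hg)
  set H : (Fin (s + s') → ℝ) → ℝ := fun w => ∏ k, h k (w k)
  have hH : Continuous H := by fun_prop
  have hHint : ∀ τ, IntegrableOn H (permSimplex τ) := fun τ =>
    (hH.continuousOn.integrableOn_compact (isCompact_univ_pi fun _ => isCompact_Icc)).mono_set
      (permSimplex_subset_pi_Icc τ)
  calc _ = ∫ w in prodSimplex s s', H w := by
        rw [setIntegral_mul_setIntegral_eq_setIntegral_finAddSplit]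
        simp [H, h, Fin.prod_univ_add, prodSimplex]
    _ = ∫ w in ⋃ τ ∈ Finset.univ.filter (fun τ : Equiv.Perm (Fin (s + s')) => IsShuffle τ),
          permSimplex τ, H w := setIntegral_congr_set (prodSimplex_ae_eq_iUnion_permSimplex s s')
    _ = ∑ τ ∈ Finset.univ.filter (fun τ : Equiv.Perm (Fin (s + s')) => IsShuffle τ),
          ∫ w in permSimplex τ, H w :=
        integral_biUnion_finset _ (fun τ _ => measurableSet_permSimplex τ)
          ((pairwise_disjoint_permSimplex _).set_pairwise _) fun τ _ => hHint τ
    _ = _ := Finset.sum_congr rfl fun τ _ => by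
        rw [permSimplex, ← setIntegral_comp_perm]
        congr 1 with v
        exact Fintype.prod_equiv τ _ _ fun k => by simp [h]
end

section
/- Let Γ be a group and A a commutative ring, and for each word w in symbols ω₁⋯ωₛ (s ≥ 0) let I_w : Γ → A satisfy I_{ω₁⋯ωₛ}(g₁g₂) = Σ_{j=0}^s I_{ω₁⋯ω_j}(g₁) I_{ω_{j+1}⋯ωₛ}(g₂) for all g₁, g₂ ∈ Γ, with I_∅ ≡ 1, and extend each I_w linearly to ℤ[Γ]. Then for α₁,…,α_r ∈ Γ, I_{ω₁⋯ωₛ}((α₁−1)⋯(α_r−1)) = 0 if s < r, and I_{ω₁⋯ω_r}((α₁−1)⋯(α_r−1)) = ∏_{j=1}^{r} I_{ωⱼ}(αⱼ) if s = r. -/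
section Aux

variable {Ω : Type*} {Γ : Type*} [Group Γ] {A : Type*} [CommRing A]

/-- The linear extension as a genuine linear map. -/
noncomputable def Lhat (I : List Ω → Γ → A) (w : List Ω) :
    MonoidAlgebra ℤ Γ →ₗ[ℤ] A :=
  Finsupp.linearCombination ℤ (I w) ∘ₗ (MonoidAlgebra.coeffLinearEquiv ℤ).toLinearMap

lemma Lhat_single (I : List Ω → Γ → A) (w : List Ω) (g : Γ) (c : ℤ) :
    Lhat I w (MonoidAlgebra.single g c) = c • I w g := by
  rw [Lhat, LinearMap.comp_apply]
  erw [Finsupp.linearCombination_single]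

lemma Lhat_key (I : List Ω → Γ → A)
    (hcomp : ∀ (w : List Ω) (g₁ g₂ : Γ),
      I w (g₁ * g₂) =
        ∑ j ∈ Finset.range (w.length + 1), I (w.take j) g₁ * I (w.drop j) g₂)
    (w : List Ω) (a : Γ) (y : MonoidAlgebra ℤ Γ) :
    Lhat I w (MonoidAlgebra.of ℤ Γ a * y) =
      ∑ j ∈ Finset.range (w.length + 1),
        I (w.take j) a * Lhat I (w.drop j) y := by
  induction y using MonoidAlgebra.induction_linear with
  | zero => simp
  | add x y hx hy =>
      rw [mul_add, map_add, hx, hy, ← Finset.sum_add_distrib]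
      simp [map_add, mul_add]
  | single g c =>
      rw [MonoidAlgebra.of_apply, MonoidAlgebra.single_mul_single, one_mul,
        Lhat_single, hcomp]
      rw [Finset.smul_sum]
      refine Finset.sum_congr rfl fun j _ => ?_
      rw [Lhat_single]
      simp only [zsmul_eq_mul]
      ring

lemma Lhat_main (I : List Ω → Γ → A)
    (hempty : ∀ g : Γ, I [] g = 1)
    (hcomp : ∀ (w : List Ω) (g₁ g₂ : Γ),
      I w (g₁ * g₂) =
        ∑ j ∈ Finset.range (w.length + 1), I (w.take j) g₁ * I (w.drop j) g₂)
    (l : List Γ) :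
    ∀ w : List Ω,
      (w.length < l.length →
        Lhat I w ((l.map fun a => MonoidAlgebra.of ℤ Γ a - 1)).prod = 0) ∧
      (w.length = l.length →
        Lhat I w ((l.map fun a => MonoidAlgebra.of ℤ Γ a - 1)).prod =
          (List.zipWith (fun a b => I [b] a) l w).prod) := by
  induction l with
  | nil =>
      intro w
      refine ⟨fun h => absurd h (by simp), fun h => ?_⟩
      have : w = [] := List.eq_nil_of_length_eq_zero (by simpa using h)
      subst this
      have : Lhat I ([] : List Ω) (1 : MonoidAlgebra ℤ Γ) = 1 := by
        rw [show (1 : MonoidAlgebra ℤ Γ) = MonoidAlgebra.single 1 1 from rfl,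
          Lhat_single, hempty, one_smul]
      simpa using this
  | cons a l ih =>
      intro w
      have expand : Lhat I w ((((a :: l).map fun a => MonoidAlgebra.of ℤ Γ a - 1)).prod) =
          ∑ j ∈ Finset.range (w.length + 1) \ {0},
            I (w.take j) a *
              Lhat I (w.drop j) ((l.map fun a => MonoidAlgebra.of ℤ Γ a - 1)).prod := by
        set y := ((l.map fun a => MonoidAlgebra.of ℤ Γ a - 1)).prod with hy
        have : (((a :: l).map fun a => MonoidAlgebra.of ℤ Γ a - 1)).prod =
            MonoidAlgebra.of ℤ Γ a * y - y := by
          simp [sub_mul, hy]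
        rw [this, map_sub, Lhat_key I hcomp]
        have h0 : (0 : ℕ) ∈ Finset.range (w.length + 1) := by simp
        rw [Finset.sum_eq_sum_sdiff_singleton_add h0]
        simp [hempty]
      constructor
      · intro hlen
        rw [expand]
        refine Finset.sum_eq_zero fun j hj => ?_
        simp only [Finset.mem_sdiff, Finset.mem_range, Finset.mem_singleton] at hj
        have hj1 : 1 ≤ j := Nat.one_le_iff_ne_zero.mpr hj.2
        have : (w.drop j).length < l.length := by
          rw [List.length_drop]
          simp only [List.length_cons] at hlen
          omega
        rw [(ih (w.drop j)).1 this, mul_zero]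
      · intro hlen
        simp only [List.length_cons] at hlen
        obtain ⟨b, w', rfl⟩ : ∃ b w', w = b :: w' := by
          cases w with
          | nil => simp at hlen
          | cons b w' => exact ⟨b, w', rfl⟩
        have hlen' : w'.length = l.length := by
          simpa using hlen
        rw [expand]
        have hset : Finset.range ((b :: w').length + 1) \ {0} =
            insert 1 (Finset.range ((b :: w').length + 1) \ {0, 1}) := by
          ext j
          simp only [Finset.mem_insert, Finset.mem_sdiff, Finset.mem_range,
            Finset.mem_singleton, Finset.mem_insert, List.length_cons]
          omega
        rw [hset, Finset.sum_insert (by simp)]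
        have hrest : ∑ j ∈ Finset.range ((b :: w').length + 1) \ {0, 1},
            I ((b :: w').take j) a *
              Lhat I ((b :: w').drop j) ((l.map fun a => MonoidAlgebra.of ℤ Γ a - 1)).prod
            = 0 := by
          refine Finset.sum_eq_zero fun j hj => ?_
          simp only [Finset.mem_sdiff, Finset.mem_range, Finset.mem_insert,
            Finset.mem_singleton, List.length_cons, not_or] at hj
          have : ((b :: w').drop j).length < l.length := by
            rw [List.length_drop]
            simp only [List.length_cons]
            omega
          rw [(ih ((b :: w').drop j)).1 this, mul_zero]
        rw [hrest, add_zero]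
        have := (ih w').2 hlen'
        simp only [List.take, List.drop] at *
        rw [this]
        simp [List.zipWith]
      
lemma zipWith_ofFn {β γ δ : Type*} (f : β → γ → δ) :
    ∀ (n : ℕ) (a : Fin n → β) (b : Fin n → γ),
      List.zipWith f (List.ofFn a) (List.ofFn b) = List.ofFn fun i => f (a i) (b i)
  | 0, _, _ => by simp
  | n + 1, a, b => by
      rw [List.ofFn_succ, List.ofFn_succ, List.ofFn_succ, List.zipWith_cons_cons,
        zipWith_ofFn f n _ _]

end Aux

/-- Abstract composition law for iterated integrals indexed by words:
if `I_∅ ≡ 1` and `I_{ω₁⋯ωₛ}(g₁g₂) = Σ_{j=0}^s I_{ω₁⋯ω_j}(g₁)·I_{ω_{j+1}⋯ωₛ}(g₂)`,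
and `I` is extended `ℤ`-linearly to the group ring, then for
`η = (α₁−1)⋯(α_r−1)` one has `I_w(η) = 0` for words `w` of length `< r`, and
`I_{ω₁⋯ω_r}(η) = ∏ⱼ I_{ωⱼ}(αⱼ)` for words of length `r`. -/
theorem iterated_integral_vanishing_on_aug_powers
    (Ω : Type*) (Γ : Type*) [Group Γ] (A : Type*) [CommRing A]
    (I : List Ω → Γ → A)
    (hempty : ∀ g : Γ, I [] g = 1)
    (hcomp : ∀ (w : List Ω) (g₁ g₂ : Γ),
      I w (g₁ * g₂) =
        ∑ j ∈ Finset.range (w.length + 1), I (w.take j) g₁ * I (w.drop j) g₂)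
    (r : ℕ) (α : Fin r → Γ)
    -- the `ℤ`-linear extension of each `I w` to the group ring
    (Ihat : List Ω → MonoidAlgebra ℤ Γ → A)
    (hIhat : ∀ (w : List Ω) (x : MonoidAlgebra ℤ Γ),
      Ihat w x = x.coeff.sum fun g c => c • I w g) :
    (∀ w : List Ω, w.length < r →
        Ihat w (List.ofFn (fun j => MonoidAlgebra.of ℤ Γ (α j) - 1)).prod = 0) ∧
      (∀ w : Fin r → Ω,
        Ihat (List.ofFn w) (List.ofFn (fun j => MonoidAlgebra.of ℤ Γ (α j) - 1)).prod =
          ∏ j, I [w j] (α j)) := by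
  have hIL : ∀ (w : List Ω) (x : MonoidAlgebra ℤ Γ), Ihat w x = Lhat I w x := by
    intro w x
    rw [hIhat, Lhat]
    exact (Finsupp.linearCombination_apply _ _).symm
  have hofFn : (List.ofFn (fun j => MonoidAlgebra.of ℤ Γ (α j) - 1)) =
      ((List.ofFn α).map fun a => MonoidAlgebra.of ℤ Γ a - 1) := by
    rw [List.map_ofFn]; rfl
  constructor
  · intro w hw
    rw [hIL, hofFn]
    exact (Lhat_main I hempty hcomp (List.ofFn α) w).1 (by simpa using hw)
  · intro w
    rw [hIL, hofFn,
      (Lhat_main I hempty hcomp (List.ofFn α) (List.ofFn w)).2 (by simp),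
      zipWith_ofFn, List.prod_ofFn]
end

section
/- In the setting of the previous composition law, for a_k = (α₁−1)⋯(α_k−1)·α_{k+1}⋯α_r one has I_{ω₁⋯ωₛ}(a_k) = Σ_{0<i₁<⋯<i_k≤i_{k+1}≤⋯≤i_{r−1}≤s} ∏_{j=1}^{r} I_{ω_{i_{j−1}+1}⋯ω_{i_j}}(α_j), where i₀ = 0 and i_r = s (the induction step in the proof of the vanishing on (α₁−1)⋯(α_r−1) for s < r). -/
/-!
Extend `I_w` ℤ-linearly to `ℤ[Γ]`. The composition law then reads
`I_w(g x) = ∑_j I_{w[:j]}(g) I_{w[j:]}(x)` for `x ∈ ℤ[Γ]`, and since `I_w(1)` is `1` for the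
empty word and `0` otherwise, `I_w((g - 1) x)` is the same sum without its `j = 0` term.
Peeling off the first factor of `a_k` in this way proves the formula by induction on `r`,
once it is generalized from `w` to its suffixes `w[a:]`, i.e. to index sequences starting at
`i₀ = a` instead of `0`: a first step `a ≤ i₁` (strict if `k > 0`) is followed by an admissible
sequence starting at `i₁`, with one factor and one strict step fewer.
-/

section IteratedIntegrals

open Finset MonoidAlgebra

variable {Ω Γ A : Type*}

theorem Fin.sum_Ici_val_eq_sum_range {M : Type*} [AddCommMonoid M] {s : ℕ} (f : ℕ → M)
    (a : Fin (s + 1)) : ∑ b ∈ Ici a, f b = ∑ j ∈ range (s - a + 1), f (a + j) := by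
  rw [← Nat.sub_add_comm a.is_le, ← sum_Ico_eq_sum_range, ← Fin.map_valEmbedding_Ici, sum_map]
  rfl

theorem Fin.sum_Ioi_val_eq_sum_range {M : Type*} [AddCommMonoid M] {s : ℕ} (f : ℕ → M)
    (a : Fin (s + 1)) : ∑ b ∈ Ioi a, f b = ∑ j ∈ range (s - a), f (a + (j + 1)) :=
  calc ∑ b ∈ Ioi a, f b = ∑ n ∈ Ioo (a : ℕ) (s + 1), f n := by
        rw [← Fin.map_valEmbedding_Ioi, sum_map]
        rfl
    _ = ∑ j ∈ range (s - a), f (a + (j + 1)) := by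
        rw [← Ico_add_one_left_eq_Ioo, sum_Ico_eq_sum_range, Nat.add_sub_add_right]
        simp only [add_assoc, add_comm 1]

def CompositionLaw [Monoid Γ] [Semiring A] (I : List Ω → Γ → A) : Prop :=
  ∀ (w : List Ω) (g₁ g₂ : Γ),
    I w (g₁ * g₂) = ∑ j ∈ range (w.length + 1), I (w.take j) g₁ * I (w.drop j) g₂

def linearExt [AddCommGroup A] (I : List Ω → Γ → A) (w : List Ω) :
    MonoidAlgebra ℤ Γ →+ A where
  toFun x := x.coeff.sum fun g c => c • I w g
  map_zero' := Finsupp.sum_zero_index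
  map_add' _ _ := Finsupp.sum_add_index' (fun _ => zero_smul ℤ _) fun _ _ _ => add_smul _ _ _

theorem linearExt_single [AddCommGroup A] (I : List Ω → Γ → A) (w : List Ω) (g : Γ) (c : ℤ) :
    linearExt I w (single g c) = c • I w g :=
  Finsupp.sum_single_index (h := fun g c => c • I w g) (zero_smul ℤ (I w g))

namespace CompositionLaw

variable [Monoid Γ] [Ring A] {I : List Ω → Γ → A}

theorem apply_one_of_ne_nil (hcomp : CompositionLaw I) (hempty : ∀ g, I [] g = 1)
    {w : List Ω} (hw : w ≠ []) : I w 1 = 0 := by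
  induction hn : w.length using Nat.strong_induction_on generalizing w with
  | _ n ih =>
  have hpos : 0 < n := hn ▸ List.length_pos_iff.mpr hw
  -- Only the terms `j = 0` and `j = n` survive in `I_w(1 * 1)`, and both equal `I_w(1)`.
  have hinner : ∀ j ∈ range (n + 1), j ≠ 0 ∧ j ≠ n → I (w.take j) 1 * I (w.drop j) 1 = 0 := by
    rintro j hj ⟨hj0, hjn⟩
    have hjn : j < n := by rw [mem_range] at hj; omega
    rw [ih j hjn (by simp [List.take_eq_nil_iff, hj0, hw]) (by rw [List.length_take, hn]; omega),
      zero_mul]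
  have h := hcomp w 1 1
  rw [one_mul, hn, sum_eq_add 0 n hpos.ne hinner (by simp) (by simp)] at h
  simp only [List.take_zero, List.drop_zero, hempty, one_mul, ← hn, List.take_length,
    List.drop_length, mul_one] at h
  exact left_eq_add.mp h

theorem linearExt_one (hcomp : CompositionLaw I) (hempty : ∀ g, I [] g = 1) (w : List Ω) :
    linearExt I w 1 = if w = [] then 1 else 0 := by
  rw [one_def, linearExt_single, one_smul]
  split_ifs with hw
  · exact hw ▸ hempty 1
  · exact hcomp.apply_one_of_ne_nil hempty hw

theorem linearExt_of_mul (hcomp : CompositionLaw I) (w : List Ω) (g : Γ)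
    (x : MonoidAlgebra ℤ Γ) :
    linearExt I w (of ℤ Γ g * x) =
      ∑ j ∈ range (w.length + 1), I (w.take j) g * linearExt I (w.drop j) x := by
  induction x using MonoidAlgebra.induction_linear with
  | zero => simp
  | add x y hx hy => simp only [mul_add, map_add, hx, hy, sum_add_distrib]
  | single m c =>
    simp only [of_apply, single_mul_single, one_mul, linearExt_single, hcomp w, smul_sum,
      mul_smul_comm]

theorem linearExt_of_sub_one_mul (hcomp : CompositionLaw I) (hempty : ∀ g, I [] g = 1)
    (w : List Ω) (g : Γ) (x : MonoidAlgebra ℤ Γ) :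
    linearExt I w ((of ℤ Γ g - 1) * x) =
      ∑ j ∈ range w.length, I (w.take (j + 1)) g * linearExt I (w.drop (j + 1)) x := by
  rw [sub_mul, one_mul, map_sub, hcomp.linearExt_of_mul, sum_range_succ']
  simp [hempty]

theorem linearExt_drop_mul (hcomp : CompositionLaw I) (hempty : ∀ g, I [] g = 1)
    {w : List Ω} {s : ℕ} (hw : w.length = s) (a : Fin (s + 1)) (k : ℕ) (g : Γ)
    (x : MonoidAlgebra ℤ Γ) :
    linearExt I (w.drop a) ((if 0 < k then of ℤ Γ g - 1 else of ℤ Γ g) * x) =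
      ∑ b ∈ (if 0 < k then Ioi a else Ici a),
        I (w.extract a b) g * linearExt I (w.drop b) x := by
  split_ifs
  · rw [hcomp.linearExt_of_sub_one_mul hempty, Fin.sum_Ioi_val_eq_sum_range
      (fun b => I (w.extract a b) g * linearExt I (w.drop b) x), List.length_drop, hw]
    simp [List.drop_drop]
  · rw [hcomp.linearExt_of_mul, Fin.sum_Ici_val_eq_sum_range
      (fun b => I (w.extract a b) g * linearExt I (w.drop b) x), List.length_drop, hw]
    simp [List.drop_drop]

end CompositionLaw

def admissible (r s k : ℕ) (a : Fin (s + 1)) : Finset (Fin (r + 1) → Fin (s + 1)) :=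
  univ.filter fun i => i 0 = a ∧ i (Fin.last r) = Fin.last s ∧
    (∀ j : Fin r, (j : ℕ) < k → i j.castSucc < i j.succ) ∧ ∀ j : Fin r, i j.castSucc ≤ i j.succ

theorem admissible_zero (s k : ℕ) (a : Fin (s + 1)) :
    admissible 0 s k a = if a = Fin.last s then {fun _ => a} else ∅ := by
  ext i
  simp only [admissible, mem_filter, mem_univ, true_and, Fin.last_zero, IsEmpty.forall_iff,
    and_true]
  split_ifs with ha
  · simp [funext_iff, Fin.forall_fin_one, ha]
  · simp only [notMem_empty, iff_false, not_and]
    rintro rfl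
    exact ha

theorem apply_zero_of_mem_admissible {r s k : ℕ} {a : Fin (s + 1)}
    {i : Fin (r + 1) → Fin (s + 1)} (hi : i ∈ admissible r s k a) : i 0 = a :=
  (mem_filter.mp hi).2.1

theorem cons_mem_admissible_succ {r s k : ℕ} {a b : Fin (s + 1)}
    {i : Fin (r + 1) → Fin (s + 1)} :
    Fin.cons b i ∈ admissible (r + 1) s k a ↔
      b = a ∧ a ≤ i 0 ∧ (0 < k → a < i 0) ∧ i ∈ admissible r s (k - 1) (i 0) := by
  simp only [admissible, mem_filter, mem_univ, true_and, Fin.forall_fin_succ, Fin.cons_zero,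
    Fin.cons_succ, ← Fin.succ_last, Fin.castSucc_zero, Fin.val_zero, ← Fin.succ_castSucc,
    Fin.val_succ, Nat.lt_sub_iff_add_lt]
  constructor <;> rintro ⟨rfl, h⟩ <;> tauto

theorem sum_admissible_succ {M : Type*} [AddCommMonoid M] {r s k : ℕ} (a : Fin (s + 1))
    (F : (Fin (r + 2) → Fin (s + 1)) → M) :
    ∑ i ∈ admissible (r + 1) s k a, F i =
      ∑ b ∈ (if 0 < k then Ioi a else Ici a),
        ∑ i ∈ admissible r s (k - 1) b, F (Fin.cons a i) := by
  have hfirst : ∀ b, b ∈ (if 0 < k then Ioi a else Ici a) ↔ a ≤ b ∧ (0 < k → a < b) := by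
    intro b
    split_ifs with hk
    · simpa [hk] using fun h : a < b => h.le
    · simp [hk]
  rw [sum_sigma']
  refine sum_bij' (fun i _ => ⟨i 1, Fin.tail i⟩) (fun p _ => Fin.cons a p.2) ?_ ?_ ?_ ?_ ?_
  · intro i hi
    rw [← Fin.cons_self_tail i, cons_mem_admissible_succ] at hi
    simpa [mem_sigma, hfirst, Fin.tail, and_assoc] using hi.2
  · rintro ⟨b, i⟩ hi
    obtain ⟨hb, hi⟩ := mem_sigma.mp hi
    rw [cons_mem_admissible_succ, apply_zero_of_mem_admissible hi]
    exact ⟨rfl, (hfirst b).mp hb |>.1, (hfirst b).mp hb |>.2, hi⟩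
  · intro i hi
    rw [← Fin.cons_self_tail i, cons_mem_admissible_succ] at hi
    rw [← hi.1, Fin.cons_self_tail]
  · rintro ⟨b, i⟩ hi
    simpa using apply_zero_of_mem_admissible (mem_sigma.mp hi).2
  · intro i hi
    rw [← Fin.cons_self_tail i, cons_mem_admissible_succ] at hi
    rw [← hi.1, Fin.cons_self_tail]

section MixedProd

variable [Monoid Γ]

/-- The element `a_k` of the paper, with factors indexed from `0`. -/
noncomputable def mixedProd (k : ℕ) {r : ℕ} (α : Fin r → Γ) : MonoidAlgebra ℤ Γ :=
  (List.ofFn fun j : Fin r => if (j : ℕ) < k then of ℤ Γ (α j) - 1 else of ℤ Γ (α j)).prod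

theorem mixedProd_zero (k : ℕ) (α : Fin 0 → Γ) : mixedProd k α = 1 := by
  simp [mixedProd]

theorem mixedProd_succ (k : ℕ) {r : ℕ} (α : Fin (r + 1) → Γ) :
    mixedProd k α =
      (if 0 < k then of ℤ Γ (α 0) - 1 else of ℤ Γ (α 0)) * mixedProd (k - 1) (Fin.tail α) := by
  simp only [mixedProd, List.ofFn_succ, List.prod_cons, Fin.val_zero, Fin.val_succ,
    Nat.lt_sub_iff_add_lt, Fin.tail]
  rfl

end MixedProd

theorem CompositionLaw.linearExt_drop_mixedProd [Monoid Γ] [CommRing A] {I : List Ω → Γ → A}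
    (hcomp : CompositionLaw I) (hempty : ∀ g, I [] g = 1) {w : List Ω} {s : ℕ}
    (hw : w.length = s) {r : ℕ} (k : ℕ) (α : Fin r → Γ) (a : Fin (s + 1)) :
    linearExt I (w.drop a) (mixedProd k α) =
      ∑ i ∈ admissible r s k a, ∏ j, I (w.extract (i j.castSucc) (i j.succ)) (α j) := by
  induction r generalizing k a with
  | zero =>
    have hdrop : w.drop a = [] ↔ a = Fin.last s := by
      rw [List.drop_eq_nil_iff, hw, Fin.ext_iff, Fin.val_last]
      have := a.is_le
      omega
    rw [mixedProd_zero, hcomp.linearExt_one hempty, admissible_zero]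
    split_ifs <;> simp_all
  | succ r ih =>
    rw [mixedProd_succ, hcomp.linearExt_drop_mul hempty hw, sum_admissible_succ]
    refine sum_congr rfl fun b _ => ?_
    rw [ih, mul_sum]
    refine sum_congr rfl fun i hi => ?_
    rw [Fin.prod_univ_succ, ← apply_zero_of_mem_admissible hi]
    simp [Fin.tail]

end IteratedIntegrals

theorem iterated_integral_induction_step_general
    (Ω : Type*) (Γ : Type*) [Group Γ] (A : Type*) [CommRing A]
    (I : List Ω → Γ → A)
    (hempty : ∀ g : Γ, I [] g = 1)
    (hcomp : ∀ (w : List Ω) (g₁ g₂ : Γ),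
      I w (g₁ * g₂) =
        ∑ j ∈ Finset.range (w.length + 1), I (w.take j) g₁ * I (w.drop j) g₂)
    (Ihat : List Ω → MonoidAlgebra ℤ Γ → A)
    (hIhat : ∀ (w : List Ω) (x : MonoidAlgebra ℤ Γ),
      Ihat w x = x.coeff.sum fun g c => c • I w g)
    (r s k : ℕ) (α : Fin r → Γ) (w : List Ω) (hw : w.length = s) :
    Ihat w (List.ofFn (fun j : Fin r =>
        if (j : ℕ) < k then MonoidAlgebra.of ℤ Γ (α j) - 1
        else MonoidAlgebra.of ℤ Γ (α j))).prod =
      ∑ i ∈ Finset.univ.filter (fun i : Fin (r + 1) → Fin (s + 1) =>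
          i 0 = 0 ∧ i (Fin.last r) = Fin.last s ∧
            (∀ j : Fin r, (j : ℕ) < k → i j.castSucc < i j.succ) ∧
            (∀ j : Fin r, i j.castSucc ≤ i j.succ)),
        ∏ j : Fin r,
          I ((w.drop (i j.castSucc)).take ((i j.succ : ℕ) - (i j.castSucc : ℕ))) (α j) := by
  obtain rfl : Ihat = fun w x => linearExt I w x := funext₂ hIhat
  have h := CompositionLaw.linearExt_drop_mixedProd hcomp hempty hw k α 0
  rwa [Fin.val_zero, List.drop_zero] at h

/-- The induction step for the composition law: with
`a_k = (α₁−1)⋯(α_k−1)·α_{k+1}⋯α_r` one has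
`I_{ω₁⋯ωₛ}(a_k) = Σ_{0<i₁<⋯<i_k≤i_{k+1}≤⋯≤i_{r−1}≤s} ∏ⱼ I_{ω_{i_{j−1}+1}⋯ω_{i_j}}(αⱼ)`,
with conventions `i₀ = 0`, `i_r = s`. -/
theorem iterated_integral_induction_step
    (Ω : Type*) (Γ : Type*) [Group Γ] (A : Type*) [CommRing A]
    (I : List Ω → Γ → A)
    (hempty : ∀ g : Γ, I [] g = 1)
    (hcomp : ∀ (w : List Ω) (g₁ g₂ : Γ),
      I w (g₁ * g₂) =
        ∑ j ∈ Finset.range (w.length + 1), I (w.take j) g₁ * I (w.drop j) g₂)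
    (Ihat : List Ω → MonoidAlgebra ℤ Γ → A)
    (hIhat : ∀ (w : List Ω) (x : MonoidAlgebra ℤ Γ),
      Ihat w x = x.coeff.sum fun g c => c • I w g)
    (r s k : ℕ) (hk : k ≤ r) (α : Fin r → Γ) (w : List Ω) (hw : w.length = s) :
    Ihat w (List.ofFn (fun j : Fin r =>
        if (j : ℕ) < k then MonoidAlgebra.of ℤ Γ (α j) - 1
        else MonoidAlgebra.of ℤ Γ (α j))).prod =
      ∑ i ∈ Finset.univ.filter (fun i : Fin (r + 1) → Fin (s + 1) =>
          i 0 = 0 ∧ i (Fin.last r) = Fin.last s ∧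
            (∀ j : Fin r, (j : ℕ) < k → i j.castSucc < i j.succ) ∧
            (∀ j : Fin r, i j.castSucc ≤ i j.succ)),
        ∏ j : Fin r,
          I ((w.drop (i j.castSucc)).take ((i j.succ : ℕ) - (i j.castSucc : ℕ))) (α j) :=
  iterated_integral_induction_step_general Ω Γ A I hempty hcomp Ihat hIhat r s k α w hw
end
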